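/- Let r ≥ 1, f : X → (0,∞), and f_⋆(x) := max_{z∈X} r^{−d(x,z)}·f(z). Define κ := max over e' ∈ E of (1/c(e'))·Σ_{e∈E} c(e)·r^{−d(e,e')}, where c(x,y) := π(x)Q(x,y). Then E(√f_⋆, √f_⋆) ≤ κ·E(√f, √f) and E(f_⋆, log f_⋆) ≤ κ·E(f, log f). -/

import Mathlib

/-!
Both energies are sums over edges of `c(e) D(h e.1, h e.2)`, with `D(a, b) = (√a - √b)²` or
`(a - b)(log a - log b)`; such a `D` is symmetric, positively homogeneous and grows as its
arguments move apart. By reversibility each sum is twice its part over the edges where `h`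
increases. Charge each edge `e = (y, x)` with `f⋆ y < f⋆ x` to an edge `t = (w, z)`
with `f w < f z`: pick `z` with `f⋆ x = r^{-k} f z`, `k = d(x, z)`, and let `w` precede `z` on the
walk `y, x, …, z` through a geodesic from `x` to `z`. Then `r^{-k} f w ≤ f⋆ y < f⋆ x`, so
`D(f⋆ y, f⋆ x) ≤ r^{-k} D(f w, f z) ≤ r^{-d(e,t)} D(f w, f z)`, and the edges charged to `t` cost
at most `∑_e c(e) r^{-d(e,t)} ≤ κ c(t)` times `D(f w, f z)`.
-/

open Finset

noncomputable section

variable {X : Type*} [Fintype X] [DecidableEq X] [Nonempty X]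

/-- Dirichlet form `E(f,g) = (1/2) ∑_{x,y} π(x) Q(x,y) (f(x)-f(y))(g(x)-g(y))`. -/
def dirichletForm (π : X → ℝ) (Q : X → X → ℝ) (f g : X → ℝ) : ℝ :=
  (1 / 2) * ∑ x : X, ∑ y : X, π x * Q x y * (f x - f y) * (g x - g y)

/-- Mean `E[f] = ∑_x π(x) f(x)`. -/
def mean (π : X → ℝ) (f : X → ℝ) : ℝ := ∑ x : X, π x * f x

/-- Entropy `Ent(f) = E[f log f] - E[f] log E[f]`. -/
def entropy (π : X → ℝ) (f : X → ℝ) : ℝ :=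
  mean π (fun x => f x * Real.log (f x)) - mean π f * Real.log (mean π f)

/-- Variance `Var(f) = E[f²] - E[f]²`. -/
def variance (π : X → ℝ) (f : X → ℝ) : ℝ :=
  mean π (fun x => f x ^ 2) - (mean π f) ^ 2

/-- Total jump rate `Q(x) = ∑_{y ≠ x} Q(x,y)`. -/
def jumpRate (Q : X → X → ℝ) (x : X) : ℝ := ∑ y ∈ univ.erase x, Q x y

/-- Sparsity parameter `p = min_{(x,y) ∈ E} Q(x,y) / max(Q(x), Q(y,x))`. -/
def sparsity (Q : X → X → ℝ) : ℝ :=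
  sInf {s : ℝ | ∃ x y : X, x ≠ y ∧ 0 < Q x y ∧
    s = Q x y / max (jumpRate Q x) (Q y x)}

/-- The transition graph `(X, E)` (symmetric since under reversibility
`Q(x,y) > 0 ↔ Q(y,x) > 0`). -/
def chainGraph (Q : X → X → ℝ) : SimpleGraph X where
  Adj x y := x ≠ y ∧ (0 < Q x y ∨ 0 < Q y x)
  symm := by constructor; intro x y h; exact ⟨h.1.symm, h.2.symm⟩
  loopless := by constructor; intro x h; exact h.1 rfl

/-- Graph distance on `(X, E)`. -/
def graphDist (Q : X → X → ℝ) (x y : X) : ℕ := (chainGraph Q).dist x y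

/-- Regularization `f⋆(x) = max_z r^{-d(x,z)} f(z)`. -/
def fStar (Q : X → X → ℝ) (r : ℝ) (f : X → ℝ) (x : X) : ℝ :=
  univ.sup' univ_nonempty (fun z => r ^ (-(graphDist Q x z : ℤ)) * f z)

/-- `(x,y)` is an allowed transition. -/
def IsEdge (Q : X → X → ℝ) (e : X × X) : Prop := e.1 ≠ e.2 ∧ 0 < Q e.1 e.2

/-- The edge set `E = {(x,y) : x ≠ y, Q(x,y) > 0}` as a finset. -/
def edges (Q : X → X → ℝ) : Finset (X × X) :=
  univ.filter (fun e => e.1 ≠ e.2 ∧ 0 < Q e.1 e.2)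

/-- Edge weight `c(x,y) = π(x) Q(x,y)`. -/
def edgeWeight (π : X → ℝ) (Q : X → X → ℝ) (e : X × X) : ℝ := π e.1 * Q e.1 e.2

/-- Distance between edges: `d(e,e') = ℓ - 1` where `ℓ` is the minimal length of a
path `(x_0, …, x_ℓ)` with `(x_0,x_1) = e` and `(x_{ℓ-1}, x_ℓ) = e'`. -/
def edgeDist (Q : X → X → ℝ) (e e' : X × X) : ℕ :=
  sInf {n : ℕ | ∃ c : ℕ → X, c 0 = e.1 ∧ c 1 = e.2 ∧ c n = e'.1 ∧ c (n + 1) = e'.2 ∧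
    ∀ i < n + 1, (chainGraph Q).Adj (c i) (c (i + 1))}

/-- `κ = max_{e' ∈ E} (1/c(e')) ∑_{e ∈ E} c(e) r^{-d(e,e')}`. -/
def kappa (π : X → ℝ) (Q : X → X → ℝ) (r : ℝ) : ℝ :=
  sSup {k : ℝ | ∃ e' ∈ edges Q, k = (1 / edgeWeight π Q e') *
    ∑ e ∈ edges Q, edgeWeight π Q e * r ^ (-(edgeDist Q e e' : ℤ))}

/-- `H(w) = ((√w + 1)/(√w - 1)) log w` for `w ≠ 1`, and `H(1) = 4`. -/
def Hfun (w : ℝ) : ℝ :=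
  if w = 1 then 4 else ((Real.sqrt w + 1) / (Real.sqrt w - 1)) * Real.log w

/-- A function is `r`-regular if `f(x) ≤ r f(y)` across every edge. -/
def IsRRegular (Q : X → X → ℝ) (r : ℝ) (f : X → ℝ) : Prop :=
  ∀ x y : X, x ≠ y → 0 < Q x y → f x ≤ r * f y

/-- Maximum degree of the graph `(X, E)`. -/
def maxDegree (Q : X → X → ℝ) : ℕ :=
  univ.sup (fun x : X => Nat.card {y : X // (chainGraph Q).Adj x y})

/-- Irreducibility: every state can be reached from every other through allowed
transitions. -/
def MarkovIrreducible (Q : X → X → ℝ) : Prop :=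
  ∀ x y : X, Relation.ReflTransGen (fun a b => a ≠ b ∧ 0 < Q a b) x y


theorem Finset.sum_le_sum_mul_of_charge {ι κ R : Type*} [CommSemiring R] [PartialOrder R]
    [IsOrderedRing R] [DecidableEq κ] {s : Finset ι} {t : Finset κ} {φ : ι → κ}
    (hφ : ∀ i ∈ s, φ i ∈ t) {a : ι → R} {w : ι → κ → R} {b K : κ → R}
    (hw : ∀ i ∈ s, ∀ j ∈ t, 0 ≤ w i j) (hb : ∀ j ∈ t, 0 ≤ b j)
    (ha : ∀ i ∈ s, a i ≤ w i (φ i) * b (φ i)) (hK : ∀ j ∈ t, ∑ i ∈ s, w i j ≤ K j) :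
    ∑ i ∈ s, a i ≤ ∑ j ∈ t, K j * b j :=
  calc ∑ i ∈ s, a i
      ≤ ∑ i ∈ s, w i (φ i) * b (φ i) := sum_le_sum ha
    _ = ∑ j ∈ t, ∑ i ∈ s with φ i = j, w i (φ i) * b (φ i) :=
        (sum_fiberwise_of_maps_to hφ _).symm
    _ = ∑ j ∈ t, (∑ i ∈ s with φ i = j, w i j) * b j := by
        refine sum_congr rfl fun j _ => ?_
        rw [sum_mul]
        exact sum_congr rfl fun i hi => by rw [(mem_filter.1 hi).2]
    _ ≤ ∑ j ∈ t, (∑ i ∈ s, w i j) * b j := by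
        refine sum_le_sum fun j hj => mul_le_mul_of_nonneg_right ?_ (hb j hj)
        exact sum_le_sum_of_subset_of_nonneg (filter_subset _ _) fun i hi _ => hw i hi j hj
    _ ≤ ∑ j ∈ t, K j * b j :=
        sum_le_sum fun j hj => mul_le_mul_of_nonneg_right (hK j hj) (hb j hj)

theorem SimpleGraph.Walk.dist_getVert_le {V : Type*} {G : SimpleGraph V} {u v : V}
    (p : G.Walk u v) (n : ℕ) : G.dist u (p.getVert n) ≤ n :=
  (SimpleGraph.dist_le (p.take n)).trans (by simp [SimpleGraph.Walk.take_length])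

theorem zpow_neg_natCast_anti {r : ℝ} (hr : 1 ≤ r) {m n : ℕ} (h : m ≤ n) :
    r ^ (-(n : ℤ)) ≤ r ^ (-(m : ℤ)) :=
  zpow_le_zpow_right₀ hr (by omega)

structure IsHomogeneousGap (D : ℝ → ℝ → ℝ) : Prop where
  symm : ∀ a b, 0 < a → 0 < b → D a b = D b a
  self : ∀ a, 0 < a → D a a = 0
  anti : ∀ a b c, 0 < c → c ≤ b → b ≤ a → D a b ≤ D a c
  smul : ∀ s a b, 0 < s → 0 < a → 0 < b → D (s * a) (s * b) = s * D a b

namespace IsHomogeneousGap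

variable {D : ℝ → ℝ → ℝ}

theorem nonneg (hD : IsHomogeneousGap D) {a b : ℝ} (ha : 0 < a) (hb : 0 < b) : 0 ≤ D a b := by
  rcases le_total b a with hba | hab
  · exact hD.self a ha ▸ hD.anti a a b hb hba le_rfl
  · rw [hD.symm a b ha hb]
    exact hD.self b hb ▸ hD.anti b b a ha hab le_rfl

end IsHomogeneousGap

theorem isHomogeneousGap_sqrt :
    IsHomogeneousGap fun a b => (Real.sqrt a - Real.sqrt b) * (Real.sqrt a - Real.sqrt b) where
  symm _ _ _ _ := by ring
  self _ _ := by ring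
  anti a b c _ hcb hba := by
    have hc := Real.sqrt_le_sqrt hcb
    have hb := Real.sqrt_le_sqrt hba
    nlinarith
  smul s a b hs _ _ := by
    rw [Real.sqrt_mul hs.le, Real.sqrt_mul hs.le]
    linear_combination (Real.sqrt a - Real.sqrt b) ^ 2 * Real.mul_self_sqrt hs.le

theorem isHomogeneousGap_log :
    IsHomogeneousGap fun a b => (a - b) * (Real.log a - Real.log b) where
  symm _ _ _ _ := by ring
  self _ _ := by ring
  anti a b c hc hcb hba := by
    have hlog_cb := Real.log_le_log hc hcb
    have hlog_ba := Real.log_le_log (hc.trans_le hcb) hba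
    exact mul_le_mul (by linarith) (by linarith) (by linarith) (by linarith)
  smul s a b hs ha hb := by
    rw [Real.log_mul hs.ne' ha.ne', Real.log_mul hs.ne' hb.ne']
    ring

section Chain

variable {π : X → ℝ} {Q : X → X → ℝ}

omit [Nonempty X] in
theorem mem_edges {e : X × X} : e ∈ edges Q ↔ e.1 ≠ e.2 ∧ 0 < Q e.1 e.2 := by
  simp [edges]

omit [Fintype X] [DecidableEq X] [Nonempty X] in
theorem pos_symm_of_reversible (hπpos : ∀ x, 0 < π x) (hrev : ∀ x y, π x * Q x y = π y * Q y x)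
    {x y : X} (h : 0 < Q x y) : 0 < Q y x :=
  pos_of_mul_pos_right (hrev x y ▸ mul_pos (hπpos x) h) (hπpos y).le

omit [Nonempty X] in
theorem chainGraph_adj_of_mem_edges {e : X × X} (he : e ∈ edges Q) :
    (chainGraph Q).Adj e.1 e.2 :=
  ⟨(mem_edges.1 he).1, Or.inl (mem_edges.1 he).2⟩

omit [Nonempty X] in
theorem mem_edges_of_chainGraph_adj (hQsymm : ∀ x y, 0 < Q x y → 0 < Q y x) {x y : X}
    (h : (chainGraph Q).Adj x y) : (x, y) ∈ edges Q :=
  mem_edges.2 ⟨h.1, h.2.elim id (hQsymm y x)⟩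

omit [Nonempty X] in
theorem swap_mem_edges (hQsymm : ∀ x y, 0 < Q x y → 0 < Q y x) {e : X × X}
    (he : e ∈ edges Q) : e.swap ∈ edges Q :=
  mem_edges_of_chainGraph_adj hQsymm (chainGraph_adj_of_mem_edges he).symm

omit [Nonempty X] in
theorem sum_edges_comp_swap (hQsymm : ∀ x y, 0 < Q x y → 0 < Q y x) (F : X × X → ℝ) :
    ∑ e ∈ edges Q, F e.swap = ∑ e ∈ edges Q, F e :=
  sum_nbij' Prod.swap Prod.swap (fun _ => swap_mem_edges hQsymm) (fun _ => swap_mem_edges hQsymm)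
    (fun e _ => e.swap_swap) (fun e _ => e.swap_swap) (fun _ _ => rfl)

omit [Fintype X] [DecidableEq X] [Nonempty X] in
theorem edgeWeight_swap (hrev : ∀ x y, π x * Q x y = π y * Q y x) (e : X × X) :
    edgeWeight π Q e.swap = edgeWeight π Q e :=
  (hrev e.1 e.2).symm

omit [Nonempty X] in
theorem edgeWeight_pos (hπpos : ∀ x, 0 < π x) {e : X × X} (he : e ∈ edges Q) :
    0 < edgeWeight π Q e :=
  mul_pos (hπpos e.1) (mem_edges.1 he).2

omit [Fintype X] [DecidableEq X] in
theorem chainGraph_connected (hirr : MarkovIrreducible Q) : (chainGraph Q).Connected := by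
  rw [SimpleGraph.connected_iff]
  refine ⟨fun x y => ?_, inferInstance⟩
  induction hirr x y with
  | refl => exact SimpleGraph.Reachable.refl x
  | tail _ hstep ih => exact ih.trans (SimpleGraph.Adj.reachable ⟨hstep.1, Or.inl hstep.2⟩)

omit [Fintype X] [DecidableEq X] [Nonempty X] in
theorem edgeDist_le_of_walk {a b : X} (p : (chainGraph Q).Walk a b) {n : ℕ}
    (hp : p.length = n + 1) : edgeDist Q (a, p.getVert 1) (p.getVert n, b) ≤ n :=
  Nat.sInf_le ⟨p.getVert, p.getVert_zero, rfl, rfl, hp ▸ p.getVert_length,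
    fun _ hi => p.adj_getVert_succ (hp ▸ hi)⟩

omit [Nonempty X] in
theorem dirichletForm_eq_sum_edges (hQ : ∀ x y, x ≠ y → 0 ≤ Q x y) (u v : X → ℝ) :
    dirichletForm π Q u v =
      1 / 2 * ∑ e ∈ edges Q, edgeWeight π Q e * ((u e.1 - u e.2) * (v e.1 - v e.2)) := by
  rw [dirichletForm, edges, sum_filter_of_ne, ← Fintype.sum_prod_type']
  · simp only [edgeWeight, mul_assoc]
  · rintro ⟨x, y⟩ - hxy
    by_cases hne : x = y
    · simp [hne] at hxy
    · refine ⟨hne, (hQ x y hne).lt_of_ne fun h => hxy ?_⟩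
      simp [edgeWeight, ← h]

omit [Nonempty X] in
theorem sum_edges_le_kappa_mul (hπpos : ∀ x, 0 < π x) (r : ℝ) {t : X × X} (ht : t ∈ edges Q) :
    ∑ e ∈ edges Q, edgeWeight π Q e * r ^ (-(edgeDist Q e t : ℤ)) ≤
      kappa π Q r * edgeWeight π Q t := by
  set F : X × X → ℝ := fun t => 1 / edgeWeight π Q t *
    ∑ e ∈ edges Q, edgeWeight π Q e * r ^ (-(edgeDist Q e t : ℤ))
  obtain ⟨M, hM⟩ := ((edges Q).image F).bddAbove
  have hle : F t ≤ kappa π Q r :=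
    le_csSup ⟨M, by rintro _ ⟨t', ht', rfl⟩; exact hM (mem_image_of_mem F ht')⟩ ⟨t, ht, rfl⟩
  simp only [F, one_div] at hle
  rwa [inv_mul_le_iff₀ (edgeWeight_pos hπpos ht), mul_comm] at hle

omit [DecidableEq X] in
theorem le_fStar (r : ℝ) (f : X → ℝ) (x z : X) :
    r ^ (-(graphDist Q x z : ℤ)) * f z ≤ fStar Q r f x :=
  le_sup' (fun z => r ^ (-(graphDist Q x z : ℤ)) * f z) (mem_univ z)

omit [DecidableEq X] in
theorem exists_fStar_eq (r : ℝ) (f : X → ℝ) (x : X) :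
    ∃ z, fStar Q r f x = r ^ (-(graphDist Q x z : ℤ)) * f z := by
  obtain ⟨z, -, hz⟩ := exists_mem_eq_sup' univ_nonempty
    (fun z => r ^ (-(graphDist Q x z : ℤ)) * f z)
  exact ⟨z, hz⟩

omit [DecidableEq X] in
theorem fStar_pos (r : ℝ) {f : X → ℝ} (hf : ∀ x, 0 < f x) (x : X) : 0 < fStar Q r f x :=
  (hf x).trans_le (by simpa [graphDist] using le_fStar (Q := Q) r f x x)

theorem exists_edge_charge (hQsymm : ∀ x y, 0 < Q x y → 0 < Q y x) (hirr : MarkovIrreducible Q)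
    {r : ℝ} (hr : 1 ≤ r) {f : X → ℝ} (hf : ∀ x, 0 < f x) {D : ℝ → ℝ → ℝ}
    (hD : IsHomogeneousGap D) {e : X × X} (he : e ∈ edges Q)
    (hlt : fStar Q r f e.1 < fStar Q r f e.2) :
    ∃ t ∈ edges Q, f t.1 < f t.2 ∧
      D (fStar Q r f e.1) (fStar Q r f e.2) ≤ r ^ (-(edgeDist Q e t : ℤ)) * D (f t.1) (f t.2) := by
  obtain ⟨y, x⟩ := e
  obtain ⟨z, hz⟩ := exists_fStar_eq (Q := Q) r f x
  set g := fStar Q r f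
  set k := graphDist Q x z
  obtain ⟨p, hp⟩ := (chainGraph_connected hirr).exists_walk_length_eq_dist x z
  set q := SimpleGraph.Walk.cons (chainGraph_adj_of_mem_edges he) p
  have hq : q.length = k + 1 := by simp [q, hp, k, graphDist]
  set w := q.getVert k
  have hwz : (w, z) ∈ edges Q := by
    refine mem_edges_of_chainGraph_adj hQsymm ?_
    simpa [← hq, q.getVert_length] using q.adj_getVert_succ (by omega : k < q.length)
  have hscale : 0 < r ^ (-(k : ℤ)) := zpow_pos (zero_lt_one.trans_le hr) _
  have hgy : r ^ (-(k : ℤ)) * f w ≤ g y :=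
    (mul_le_mul_of_nonneg_right (zpow_neg_natCast_anti hr (q.dist_getVert_le k)) (hf w).le).trans
      (le_fStar r f y w)
  have hfwz : f w < f z := lt_of_mul_lt_mul_left (hgy.trans_lt (hlt.trans_eq hz)) hscale.le
  have hdist : edgeDist Q (y, x) (w, z) ≤ k := by
    simpa [q] using edgeDist_le_of_walk q hq
  refine ⟨(w, z), hwz, hfwz, ?_⟩
  have hgx := fStar_pos (Q := Q) r hf x
  calc D (g y) (g x) = D (g x) (g y) := hD.symm _ _ (fStar_pos (Q := Q) r hf y) hgx
    _ ≤ D (g x) (r ^ (-(k : ℤ)) * f w) := hD.anti _ _ _ (mul_pos hscale (hf w)) hgy hlt.le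
    _ = r ^ (-(k : ℤ)) * D (f z) (f w) := by rw [hz, hD.smul _ _ _ hscale (hf z) (hf w)]
    _ ≤ r ^ (-(edgeDist Q (y, x) (w, z) : ℤ)) * D (f z) (f w) :=
        mul_le_mul_of_nonneg_right (zpow_neg_natCast_anti hr hdist) (hD.nonneg (hf z) (hf w))
    _ = r ^ (-(edgeDist Q (y, x) (w, z) : ℤ)) * D (f w) (f z) := by rw [hD.symm _ _ (hf z) (hf w)]

omit [Nonempty X] in
theorem sum_edges_eq_two_mul_sum_filter_lt (hQsymm : ∀ x y, 0 < Q x y → 0 < Q y x)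
    (hrev : ∀ x y, π x * Q x y = π y * Q y x) {D : ℝ → ℝ → ℝ} (hD : IsHomogeneousGap D)
    {h : X → ℝ} (hh : ∀ x, 0 < h x) :
    ∑ e ∈ edges Q, edgeWeight π Q e * D (h e.1) (h e.2) =
      2 * ∑ e ∈ edges Q with h e.1 < h e.2, edgeWeight π Q e * D (h e.1) (h e.2) := by
  set F : X × X → ℝ := fun e => edgeWeight π Q e * D (h e.1) (h e.2)
  set G : X × X → ℝ := fun e => if h e.1 < h e.2 then F e else 0
  have hFG : ∀ e, F e = G e + G e.swap := by
    intro e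
    rcases lt_trichotomy (h e.1) (h e.2) with hlt | heq | hgt
    · simp [G, hlt, hlt.not_gt]
    · simp [F, G, heq, hD.self _ (hh e.2)]
    · simp only [G, F, hgt.not_gt, hgt, if_true, if_false, zero_add, Prod.fst_swap,
        Prod.snd_swap, edgeWeight_swap hrev, hD.symm _ _ (hh e.1) (hh e.2)]
  calc ∑ e ∈ edges Q, F e = ∑ e ∈ edges Q, (G e + G e.swap) := sum_congr rfl fun e _ => hFG e
    _ = 2 * ∑ e ∈ edges Q, G e := by rw [sum_add_distrib, sum_edges_comp_swap hQsymm G, two_mul]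
    _ = 2 * ∑ e ∈ edges Q with h e.1 < h e.2, F e := by rw [sum_filter]

theorem sum_edges_fStar_le (hπpos : ∀ x, 0 < π x) (hrev : ∀ x y, π x * Q x y = π y * Q y x)
    (hirr : MarkovIrreducible Q) {r : ℝ} (hr : 1 ≤ r) {f : X → ℝ} (hf : ∀ x, 0 < f x)
    {D : ℝ → ℝ → ℝ} (hD : IsHomogeneousGap D) :
    ∑ e ∈ edges Q, edgeWeight π Q e * D (fStar Q r f e.1) (fStar Q r f e.2) ≤
      kappa π Q r * ∑ e ∈ edges Q, edgeWeight π Q e * D (f e.1) (f e.2) := by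
  have hQsymm : ∀ x y, 0 < Q x y → 0 < Q y x := fun _ _ => pos_symm_of_reversible hπpos hrev
  set g := fStar Q r f
  have hg := fStar_pos (Q := Q) r hf
  have hex : ∀ e ∈ (edges Q).filter fun e => g e.1 < g e.2, ∃ t ∈ edges Q, f t.1 < f t.2 ∧
      D (g e.1) (g e.2) ≤ r ^ (-(edgeDist Q e t : ℤ)) * D (f t.1) (f t.2) := fun e he =>
    exists_edge_charge hQsymm hirr hr hf hD (mem_filter.1 he).1 (mem_filter.1 he).2
  choose! φ hφ hφlt hφD using hex
  have hcharge : ∑ e ∈ edges Q with g e.1 < g e.2, edgeWeight π Q e * D (g e.1) (g e.2) ≤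
      ∑ t ∈ edges Q with f t.1 < f t.2, kappa π Q r * edgeWeight π Q t * D (f t.1) (f t.2) := by
    refine sum_le_sum_mul_of_charge
      (w := fun e t => edgeWeight π Q e * r ^ (-(edgeDist Q e t : ℤ)))
      (fun e he => mem_filter.2 ⟨hφ e he, hφlt e he⟩) ?_ ?_ ?_ ?_
    · exact fun e he _ _ => mul_nonneg (edgeWeight_pos hπpos (mem_filter.1 he).1).le
        (zpow_pos (zero_lt_one.trans_le hr) _).le
    · exact fun t _ => hD.nonneg (hf t.1) (hf t.2)
    · intro e he
      rw [mul_assoc]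
      exact mul_le_mul_of_nonneg_left (hφD e he) (edgeWeight_pos hπpos (mem_filter.1 he).1).le
    · intro t ht
      refine (sum_le_sum_of_subset_of_nonneg (filter_subset _ _) fun e he _ => ?_).trans
        (sum_edges_le_kappa_mul hπpos r (mem_filter.1 ht).1)
      exact mul_nonneg (edgeWeight_pos hπpos he).le (zpow_pos (zero_lt_one.trans_le hr) _).le
  calc ∑ e ∈ edges Q, edgeWeight π Q e * D (g e.1) (g e.2)
      = 2 * ∑ e ∈ edges Q with g e.1 < g e.2, edgeWeight π Q e * D (g e.1) (g e.2) :=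
        sum_edges_eq_two_mul_sum_filter_lt hQsymm hrev hD hg
    _ ≤ 2 * ∑ t ∈ edges Q with f t.1 < f t.2,
          kappa π Q r * edgeWeight π Q t * D (f t.1) (f t.2) :=
        mul_le_mul_of_nonneg_left hcharge zero_le_two
    _ = kappa π Q r *
          (2 * ∑ t ∈ edges Q with f t.1 < f t.2, edgeWeight π Q t * D (f t.1) (f t.2)) := by
        simp only [mul_assoc, ← mul_sum]
        ring
    _ = kappa π Q r * ∑ e ∈ edges Q, edgeWeight π Q e * D (f e.1) (f e.2) := by
        rw [sum_edges_eq_two_mul_sum_filter_lt hQsymm hrev hD hf]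

theorem dirichletForm_comp_fStar_le (hQ : ∀ x y, x ≠ y → 0 ≤ Q x y) (hπpos : ∀ x, 0 < π x)
    (hrev : ∀ x y, π x * Q x y = π y * Q y x) (hirr : MarkovIrreducible Q) {r : ℝ} (hr : 1 ≤ r)
    {f : X → ℝ} (hf : ∀ x, 0 < f x) {u v : ℝ → ℝ}
    (huv : IsHomogeneousGap fun a b => (u a - u b) * (v a - v b)) :
    dirichletForm π Q (fun x => u (fStar Q r f x)) (fun x => v (fStar Q r f x)) ≤
      kappa π Q r * dirichletForm π Q (fun x => u (f x)) (fun x => v (f x)) := by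
  have h := sum_edges_fStar_le hπpos hrev hirr hr hf huv
  rw [dirichletForm_eq_sum_edges hQ, dirichletForm_eq_sum_edges hQ]
  linarith

end Chain

theorem dirichlet_comparison_kappa_general
    (π : X → ℝ) (Q : X → X → ℝ)
    (hQ : ∀ x y : X, x ≠ y → 0 ≤ Q x y)
    (hirr : MarkovIrreducible Q)
    (hπpos : ∀ x : X, 0 < π x)
    (hrev : ∀ x y : X, π x * Q x y = π y * Q y x)
    (r : ℝ) (hr : 1 ≤ r) (f : X → ℝ) (hf : ∀ x, 0 < f x) :
     dirichletForm π Q (fun x => Real.sqrt (fStar Q r f x)) (fun x => Real.sqrt (fStar Q r f x)) ≤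
      kappa π Q r * dirichletForm π Q (fun x => Real.sqrt (f x)) (fun x => Real.sqrt (f x)) ∧
    dirichletForm π Q (fStar Q r f) (fun x => Real.log (fStar Q r f x)) ≤
      kappa π Q r * dirichletForm π Q f (fun x => Real.log (f x)) :=
  ⟨dirichletForm_comp_fStar_le hQ hπpos hrev hirr hr hf isHomogeneousGap_sqrt,
    dirichletForm_comp_fStar_le (u := id) hQ hπpos hrev hirr hr hf isHomogeneousGap_log⟩

theorem dirichlet_comparison_kappa
    (π : X → ℝ) (Q : X → X → ℝ)
    (hQ : ∀ x y : X, x ≠ y → 0 ≤ Q x y)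
    (hQsum : ∀ x : X, ∑ y : X, Q x y = 0)
    (hirr : MarkovIrreducible Q)
    (hπpos : ∀ x : X, 0 < π x)
    (hπsum : ∑ x : X, π x = 1)
    (hrev : ∀ x y : X, π x * Q x y = π y * Q y x)
    (r : ℝ) (hr : 1 ≤ r) (f : X → ℝ) (hf : ∀ x, 0 < f x) :
     dirichletForm π Q (fun x => Real.sqrt (fStar Q r f x)) (fun x => Real.sqrt (fStar Q r f x)) ≤
      kappa π Q r * dirichletForm π Q (fun x => Real.sqrt (f x)) (fun x => Real.sqrt (f x)) ∧
    dirichletForm π Q (fStar Q r f) (fun x => Real.log (fStar Q r f x)) ≤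
      kappa π Q r * dirichletForm π Q f (fun x => Real.log (f x)) :=
  dirichlet_comparison_kappa_general π Q hQ hirr hπpos hrev r hr f hf
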